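/- arXiv:2408.05969 — 6 statements merged into one kernel-verified Lean document; each statement's English description precedes it below -/
import Mathlib

section
/- For every real X ≥ 1, the identity 2γ + ∑_{n ≤ X} μ(n)·(log n)² = ∑_{kℓ ≤ X} μ(ℓ)·(Λ⋆Λ(k) − Λ(k)·log k + 2γ) holds, where γ is the Euler–Mascheroni constant, μ is the Möbius function, Λ is the von Mangoldt function, and Λ⋆Λ denotes Dirichlet convolution. -/
/-!
Since `ArithmeticFunction.log` is completely additive, `f ↦ f · log` is a derivation of the
Dirichlet ring. Applying it to `μ ⋆ 1 = δ` gives `μ · log = -(Λ ⋆ μ)`, and applying it once more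
gives `μ · log² = (Λ ⋆ Λ - Λ · log) ⋆ μ`. Summing over `n ≤ X` turns the convolution with `μ` into
the double sum over `kℓ ≤ X`, while the constant `2γ` contributes `2γ ∑_{n ≤ X} (1 ⋆ μ)(n) = 2γ`.
-/

open Finset Real ArithmeticFunction

/-- Dirichlet convolution `Λ ⋆ Λ`. -/
noncomputable def LamLam (k : ℕ) : ℝ :=
  ∑ d ∈ k.divisors, Λ d * Λ (k / d)

open scoped ArithmeticFunction.Moebius ArithmeticFunction.zeta

namespace ArithmeticFunction

theorem sub_apply {R : Type*} [AddGroup R] (f g : ArithmeticFunction R) (n : ℕ) :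
    (f - g) n = f n - g n := by
  rw [sub_eq_add_neg, add_apply, neg_apply, sub_eq_add_neg]

theorem neg_pmul {R : Type*} [NonUnitalNonAssocRing R] (f g : ArithmeticFunction R) :
    (-f).pmul g = -f.pmul g := by
  ext n
  simp only [pmul_apply, neg_apply, neg_mul]

theorem pmul_log_mul (f g : ArithmeticFunction ℝ) :
    (f * g).pmul log = f.pmul log * g + f * g.pmul log := by
  ext n
  simp only [pmul_apply, mul_apply, add_apply, log_apply, sum_mul, ← sum_add_distrib]
  refine sum_congr rfl fun p hp ↦ ?_
  obtain ⟨rfl, hn⟩ := Nat.mem_divisorsAntidiagonal.mp hp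
  obtain ⟨h₁, h₂⟩ := mul_ne_zero_iff.mp hn
  rw [Nat.cast_mul, Real.log_mul (mod_cast h₁) (mod_cast h₂)]
  ring

theorem one_pmul_log : (1 : ArithmeticFunction ℝ).pmul log = 0 := by
  simpa using pmul_log_mul 1 1

theorem moebius_pmul_log : (μ : ArithmeticFunction ℝ).pmul log = -(Λ * μ) := by
  have h : (μ : ArithmeticFunction ℝ).pmul log * ζ = -Λ := by
    have := pmul_log_mul μ ζ
    rw [coe_moebius_mul_coe_zeta, one_pmul_log, zeta_pmul, moebius_mul_log_eq_vonMangoldt] at this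
    linear_combination -this
  calc (μ : ArithmeticFunction ℝ).pmul log = (μ : ArithmeticFunction ℝ).pmul log * ζ * μ := by
        rw [mul_assoc, coe_zeta_mul_coe_moebius, mul_one]
    _ = -(Λ * μ) := by rw [h, neg_mul]

theorem moebius_pmul_log_sq :
    (μ : ArithmeticFunction ℝ).pmul (log.pmul log) = (Λ * Λ - vonMangoldt.pmul log) * μ := by
  rw [← pmul_assoc, moebius_pmul_log, neg_pmul, pmul_log_mul, moebius_pmul_log]
  ring

theorem sum_Icc_floor_mul_eq_sum_mul {R K : Type*} [CommSemiring R] [Semifield K] [LinearOrder K]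
    [IsStrictOrderedRing K] [FloorSemiring K] (f g : ArithmeticFunction R) (X : K) :
    ∑ k ∈ Icc 1 ⌊X⌋₊, ∑ ℓ ∈ Icc 1 ⌊X / k⌋₊, g ℓ * f k = ∑ n ∈ Icc 1 ⌊X⌋₊, (f * g) n := by
  have hIcc (N : ℕ) : Icc 1 N = Ioc 0 N := Icc_add_one_left_eq_Ioc 0 N
  simp only [Nat.floor_div_natCast, hIcc, sum_Ioc_mul_eq_sum_sum, mul_sum]
  exact sum_congr rfl fun k _ ↦ sum_congr rfl fun ℓ _ ↦ mul_comm _ _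

end ArithmeticFunction

theorem LamLam_eq_mul_apply (k : ℕ) : LamLam k = (Λ * Λ) k := by
  rw [LamLam, mul_apply, Nat.sum_divisorsAntidiagonal fun a b ↦ Λ a * Λ b]

theorem stmt0 (X : ℝ) (hX : 1 ≤ X) :
    2 * Real.eulerMascheroniConstant
      + ∑ n ∈ Finset.Icc 1 ⌊X⌋₊, (ArithmeticFunction.moebius n : ℝ) * (Real.log n) ^ 2
    = ∑ k ∈ Finset.Icc 1 ⌊X⌋₊, ∑ ℓ ∈ Finset.Icc 1 ⌊X / k⌋₊,
        (ArithmeticFunction.moebius ℓ : ℝ) * (LamLam k - Λ k * Real.log k + 2 * Real.eulerMascheroniConstant) := by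
  set c := 2 * eulerMascheroniConstant
  set G : ArithmeticFunction ℝ := Λ * Λ - vonMangoldt.pmul log + c • (ζ : ArithmeticFunction ℝ)
  have hGμ : G * μ = (μ : ArithmeticFunction ℝ).pmul (log.pmul log) + c • 1 := by
    rw [add_mul, moebius_pmul_log_sq, smul_mul_assoc, coe_zeta_mul_coe_moebius]
  have hG_apply {k : ℕ} (hk : k ∈ Icc 1 ⌊X⌋₊) : G k = LamLam k - Λ k * Real.log k + c := by
    have hk0 : k ≠ 0 := by grind
    simp [G, LamLam_eq_mul_apply, ArithmeticFunction.sub_apply, hk0]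
  have h1 : 1 ∈ Icc 1 ⌊X⌋₊ := mem_Icc.mpr ⟨le_rfl, Nat.one_le_floor_iff X |>.mpr hX⟩
  calc c + ∑ n ∈ Icc 1 ⌊X⌋₊, (μ n : ℝ) * Real.log n ^ 2
      = ∑ n ∈ Icc 1 ⌊X⌋₊, (G * μ) n := by
        simp [hGμ, sum_add_distrib, pmul_apply, log_apply, one_apply, h1, sq, add_comm]
    _ = _ := by
        rw [← sum_Icc_floor_mul_eq_sum_mul]
        exact sum_congr rfl fun k hk ↦ sum_congr rfl fun ℓ _ ↦ by rw [hG_apply hk, intCoe_apply]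
end

section
/- For every real X ≥ 1, |m(X)| ≤ |M(X)|/X + (1/X²)·∫₁^X |M(t)| dt + 8/(3X), where M(X) = ∑_{n ≤ X} μ(n) and m(X) = ∑_{n ≤ X} μ(n)/n. -/
open Finset Real ArithmeticFunction
open scoped ArithmeticFunction.Moebius

/-- Mertens function `M(X) = ∑_{n ≤ X} μ(n)`. -/
noncomputable def Mf (X : ℝ) : ℝ := ∑ n ∈ Finset.Icc 1 ⌊X⌋₊, (μ n : ℝ)

/-- `m(X) = ∑_{n ≤ X} μ(n)/n`. -/
noncomputable def mf (X : ℝ) : ℝ := ∑ n ∈ Finset.Icc 1 ⌊X⌋₊, (μ n : ℝ) / n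

/-!
Take the weight `P(u) = (1 - u)² (1 + u / 2)`. Möbius inversion gives
`∑_{n ≤ X} μ(n) ∑_{m ≤ X/n} P(nm/X) = P(1/X) ∈ [0, 1]`, and by Faulhaber's formulas the inner
sum is `3Y/8 - 1/2 + 1/(8Y) + R(1/Y)` with `Y = X/n`. Here `R(u) = E(u, {1/u})` for an explicit
polynomial `E` vanishing at `θ = 0` and `θ = 1`, so `R` is continuous on `(0, 1]` with `R(1) = 0`;
off the countable set `{1/k}` its derivative lies in `[-1/4, 1/4]`, so `R` is `1/4`-Lipschitz.
Abel summation turns `∑ μ(n) n` into `X M(X) - ∫₁^X M` and bounds `∑ μ(n) R(n/X)` by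
`(1/(4X)) ∫₁^X |M|`; solving the identity for `m(X)` gives the inequality.
-/

open MeasureTheory Filter Topology intervalIntegral

theorem sum_moebius_eq_ite {R : Type*} [Ring R] (k : ℕ) :
    ∑ d ∈ k.divisors, (μ d : R) = if k = 1 then 1 else 0 := by
  have h := coe_mul_zeta_apply (f := (μ : ArithmeticFunction R)) (x := k)
  simp only [intCoe_apply] at h
  rw [← h, coe_moebius_mul_coe_zeta, one_apply]

theorem sum_Icc_div_mul_eq_sum_filter_dvd {M : Type*} [AddCommMonoid M] (W : ℕ → M) {n : ℕ}
    (hn : 0 < n) (N : ℕ) :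
    ∑ m ∈ Icc 1 (N / n), W (n * m) = ∑ k ∈ Icc 1 N with n ∣ k, W k := by
  refine sum_nbij' (n * ·) (· / n) (fun m hm => ?_) (fun k hk => ?_) (fun m _ => ?_)
    (fun k hk => ?_) fun _ _ => rfl
  · simp only [mem_filter, mem_Icc] at hm ⊢
    exact ⟨⟨Nat.mul_pos hn hm.1, by nlinarith [(Nat.le_div_iff_mul_le hn).1 hm.2]⟩,
      dvd_mul_right n m⟩
  · simp only [mem_filter, mem_Icc] at hk ⊢
    exact ⟨Nat.div_pos (Nat.le_of_dvd hk.1.1 hk.2) hn, Nat.div_le_div_right hk.1.2⟩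
  · exact Nat.mul_div_cancel_left m hn
  · simp only [mem_filter] at hk
    exact Nat.mul_div_cancel' hk.2

theorem sum_moebius_mul_sum_Icc_div {R : Type*} [CommRing R] (W : ℕ → R) {N : ℕ} (hN : 1 ≤ N) :
    ∑ n ∈ Icc 1 N, (μ n : R) * ∑ m ∈ Icc 1 (N / n), W (n * m) = W 1 := by
  calc ∑ n ∈ Icc 1 N, (μ n : R) * ∑ m ∈ Icc 1 (N / n), W (n * m)
      = ∑ n ∈ Icc 1 N, ∑ k ∈ Icc 1 N, if n ∣ k then (μ n : R) * W k else 0 := by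
        refine sum_congr rfl fun n hn => ?_
        rw [sum_Icc_div_mul_eq_sum_filter_dvd _ (mem_Icc.1 hn).1, mul_sum, sum_filter]
    _ = ∑ k ∈ Icc 1 N, (∑ d ∈ k.divisors, (μ d : R)) * W k := by
        rw [sum_comm]
        refine sum_congr rfl fun k hk => ?_
        rw [sum_mul, ← sum_filter]
        congr 1
        ext d
        simp only [mem_filter, mem_Icc, Nat.mem_divisors]
        obtain ⟨hk1, hkN⟩ := mem_Icc.1 hk
        constructor
        · rintro ⟨-, hd⟩
          exact ⟨hd, by omega⟩
        · rintro ⟨hd, -⟩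
          exact ⟨⟨Nat.pos_of_dvd_of_pos hd hk1, (Nat.le_of_dvd hk1 hd).trans hkN⟩, hd⟩
    _ = W 1 := by
        simp_rw [sum_moebius_eq_ite, ite_mul, one_mul, zero_mul]
        rw [sum_ite_eq' (Icc 1 N) 1]
        simp [hN]

theorem sum_Icc_mul_eq_sub_sum_Ico {R : Type*} [CommRing R] (c g : ℕ → R) (F : ℕ) :
    ∑ n ∈ Icc 1 F, c n * g n
      = (∑ n ∈ Icc 1 F, c n) * g F - ∑ j ∈ Ico 1 F, (∑ n ∈ Icc 1 j, c n) * (g (j + 1) - g j) := by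
  induction F with
  | zero => simp
  | succ F ih =>
    rcases F.eq_zero_or_pos with rfl | hF
    · simp
    rw [sum_Icc_succ_top (by omega), sum_Icc_succ_top (by omega), sum_Ico_succ_top hF, ih]
    ring

section StepFunction

variable {E : Type*} (q : ℕ → E)

theorem eqOn_comp_floor {j : ℕ} {a b : ℝ} (ha : j ≤ a) (hab : a ≤ b) (hb : b ≤ j + 1) :
    Set.EqOn (fun t => q ⌊t⌋₊) (fun _ => q j) (Set.uIoo a b) := by
  intro t ht
  rw [Set.uIoo_of_le hab] at ht
  simp only [Nat.floor_eq_on_Ico j t ⟨ha.trans ht.1.le, ht.2.trans_le hb⟩]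

variable [NormedAddCommGroup E]

theorem intervalIntegrable_comp_floor_of_le {j : ℕ} {a b : ℝ} (ha : j ≤ a) (hab : a ≤ b)
    (hb : b ≤ j + 1) : IntervalIntegrable (fun t => q ⌊t⌋₊) volume a b :=
  intervalIntegrable_const.congr_uIoo (eqOn_comp_floor q ha hab hb).symm

variable [NormedSpace ℝ E] [CompleteSpace E]

theorem integral_comp_floor_of_le {j : ℕ} {a b : ℝ} (ha : j ≤ a) (hab : a ≤ b) (hb : b ≤ j + 1) :
    ∫ t in a..b, q ⌊t⌋₊ = (b - a) • q j := by
  rw [integral_congr_uIoo (eqOn_comp_floor q ha hab hb), intervalIntegral.integral_const]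

theorem integral_comp_floor_eq_sum {x : ℝ} (hx : 1 ≤ x) :
    ∫ t in (1 : ℝ)..x, q ⌊t⌋₊ = ∑ j ∈ Ico 1 ⌊x⌋₊, q j + (x - ⌊x⌋₊) • q ⌊x⌋₊ := by
  set F := ⌊x⌋₊
  have hF : 1 ≤ F := Nat.le_floor (by exact_mod_cast hx)
  have hpiece : ∀ k : ℕ, IntervalIntegrable (fun t => q ⌊t⌋₊) volume k ↑(k + 1) := fun k =>
    intervalIntegrable_comp_floor_of_le q le_rfl (by push_cast; linarith) (by push_cast; rfl)
  have h1 : IntervalIntegrable (fun t => q ⌊t⌋₊) volume 1 F := by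
    simpa using IntervalIntegrable.trans_iterate_Ico (a := Nat.cast) hF fun k _ => hpiece k
  have h2 : IntervalIntegrable (fun t => q ⌊t⌋₊) volume F x :=
    intervalIntegrable_comp_floor_of_le q le_rfl (Nat.floor_le (by linarith))
      (Nat.lt_floor_add_one x).le
  rw [← integral_add_adjacent_intervals h1 h2, integral_comp_floor_of_le q le_rfl
    (Nat.floor_le (by linarith)) (Nat.lt_floor_add_one x).le]
  congr 1
  have := sum_integral_adjacent_intervals_Ico (a := Nat.cast) hF fun k _ => hpiece k
  push_cast at this
  rw [← this]
  refine sum_congr rfl fun k _ => ?_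
  rw [integral_comp_floor_of_le q le_rfl (by linarith) le_rfl, add_sub_cancel_left, one_smul]

end StepFunction

theorem sum_mul_natCast_eq_sub_integral (c : ℕ → ℝ) {X : ℝ} (hX : 1 ≤ X) :
    ∑ n ∈ Icc 1 ⌊X⌋₊, c n * n
      = X * ∑ n ∈ Icc 1 ⌊X⌋₊, c n - ∫ t in (1 : ℝ)..X, ∑ n ∈ Icc 1 ⌊t⌋₊, c n := by
  rw [sum_Icc_mul_eq_sub_sum_Ico c Nat.cast,
    integral_comp_floor_eq_sum (fun j => ∑ n ∈ Icc 1 j, c n) hX]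
  simp only [Nat.cast_add, Nat.cast_one, add_sub_cancel_left, mul_one, smul_eq_mul]
  ring

theorem abs_sum_mul_sub_le_of_lipschitz (c : ℕ → ℝ) {h : ℝ → ℝ} {X L : ℝ} (hX : 1 ≤ X)
    (hh : ∀ u v, 1 ≤ u → u ≤ v → v ≤ X → |h v - h u| ≤ L * (v - u)) :
    |∑ n ∈ Icc 1 ⌊X⌋₊, c n * h n - (∑ n ∈ Icc 1 ⌊X⌋₊, c n) * h X|
      ≤ L * ∫ t in (1 : ℝ)..X, |∑ n ∈ Icc 1 ⌊t⌋₊, c n| := by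
  set F := ⌊X⌋₊
  set C : ℕ → ℝ := fun j => ∑ n ∈ Icc 1 j, c n
  have hF : (1 : ℝ) ≤ F := by exact_mod_cast Nat.le_floor (by exact_mod_cast hX)
  have hFX : (F : ℝ) ≤ X := Nat.floor_le (by linarith)
  rw [sum_Icc_mul_eq_sub_sum_Ico c (fun n => h n), integral_comp_floor_eq_sum (fun j => |C j|) hX,
    smul_eq_mul]
  calc |C F * h F - ∑ j ∈ Ico 1 F, C j * (h ↑(j + 1) - h j) - C F * h X|
      = |∑ j ∈ Ico 1 F, C j * (h ↑(j + 1) - h j) + C F * (h X - h F)| := by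
        rw [← abs_neg]; ring_nf
    _ ≤ ∑ j ∈ Ico 1 F, |C j| * |h ↑(j + 1) - h j| + |C F| * |h X - h F| := by
        grw [abs_add_le, abs_sum_le_sum_abs]
        simp only [abs_mul, le_refl]
    _ ≤ ∑ j ∈ Ico 1 F, |C j| * (L * 1) + |C F| * (L * (X - F)) := by
        gcongr with j hj
        · have hj1 : (1 : ℝ) ≤ j := by exact_mod_cast (mem_Ico.1 hj).1
          have hjF : ((j + 1 : ℕ) : ℝ) ≤ F := by exact_mod_cast (mem_Ico.1 hj).2
          have := hh j (j + 1 : ℕ) hj1 (by push_cast; linarith) (hjF.trans hFX)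
          push_cast at this ⊢
          linarith
        · exact hh F X hF hFX le_rfl
    _ = L * (∑ j ∈ Ico 1 F, |C j| + (X - F) * |C F|) := by
        rw [mul_add, mul_sum]
        congr 1
        · exact sum_congr rfl fun j _ => by ring
        · ring

theorem norm_sub_le_of_hasDerivAt_off_countable {E : Type*} [NormedAddCommGroup E]
    [NormedSpace ℝ E] [CompleteSpace E] {f f' : ℝ → E} {a b C : ℝ} {s : Set ℝ}
    (hab : a ≤ b) (hs : s.Countable) (hc : ContinuousOn f (Set.Icc a b))
    (hd : ∀ x ∈ Set.Ioo a b \ s, HasDerivAt f (f' x) x) (hC : ∀ x ∈ Set.Ioo a b \ s, ‖f' x‖ ≤ C) :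
    ‖f b - f a‖ ≤ C * (b - a) := by
  have hgood : ∀ᵐ x, x ∈ Set.uIoc a b → x ∈ Set.Ioo a b \ s := by
    filter_upwards [hs.ae_notMem volume, (Set.countable_singleton b).ae_notMem volume]
      with x hxs hxb hx
    rw [Set.uIoc_of_le hab] at hx
    exact ⟨⟨hx.1, lt_of_le_of_ne hx.2 hxb⟩, hxs⟩
  have hbound : ∀ᵐ x, x ∈ Set.uIoc a b → ‖deriv f x‖ ≤ C := by
    filter_upwards [hgood] with x hx hxI
    rw [(hd x (hx hxI)).deriv]
    exact hC x (hx hxI)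
  -- `deriv f` rather than `f'` is integrated because it is measurable with no assumption on `f'`.
  have hint : IntervalIntegrable (deriv f) volume a b := by
    rw [intervalIntegrable_iff]
    refine Measure.integrableOn_of_bounded (M := C) measure_Ioc_lt_top.ne
      (aestronglyMeasurable_deriv f _) ?_
    exact (ae_restrict_iff' measurableSet_uIoc).2 hbound
  rw [← integral_eq_of_hasDerivAt_off_countable_of_le f (deriv f) hab hs hc
    (fun x hx => (hd x hx).differentiableAt.hasDerivAt) hint, ← abs_of_nonneg (sub_nonneg.2 hab)]
  exact intervalIntegral.norm_integral_le_of_norm_le_const_ae hbound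

noncomputable section

namespace Balazard

def remainderPoly (s θ : ℝ) : ℝ :=
  -(s ^ 2 * (θ * (1 - θ) * (1 - 2 * θ))) / 4 + s ^ 3 * (θ * (1 - θ)) ^ 2 / 8

def remainder (u : ℝ) : ℝ := remainderPoly u (Int.fract u⁻¹)

def remainderDeriv (s θ : ℝ) : ℝ :=
  (2 - θ * (1 - θ) * (12 + 6 * s * (1 - 2 * θ) - 3 * s ^ 2 * (θ * (1 - θ)))) / 8

theorem remainder_one : remainder 1 = 0 := by
  simp [remainder, remainderPoly]

theorem continuousOn_remainder : ContinuousOn remainder {0}ᶜ := by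
  have hpoly : Continuous fun p : ℝ × ℝ => remainderPoly p.1 (Int.fract p.2) :=
    ContinuousOn.comp_fract' (f := remainderPoly)
      (Continuous.continuousOn (by unfold Function.uncurry remainderPoly; fun_prop))
      (by simp [remainderPoly])
  have hpair : ContinuousOn (fun u : ℝ => (u, u⁻¹)) {0}ᶜ :=
    continuousOn_id.prodMk (continuousOn_inv₀ (G₀ := ℝ))
  exact (hpoly.comp_continuousOn hpair).congr fun u _ => rfl

theorem hasDerivAt_remainderPoly_inv_sub {u : ℝ} (hu : u ≠ 0) (n : ℝ) :
    HasDerivAt (fun v => remainderPoly v (v⁻¹ - n)) (remainderDeriv u (u⁻¹ - n)) u := by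
  have hθ : HasDerivAt (fun v : ℝ => v⁻¹ - n) (-(u ^ 2)⁻¹) u := (hasDerivAt_inv hu).sub_const n
  have hσ := hθ.mul (hθ.const_sub 1)
  have h := (((hasDerivAt_pow 2 u).mul (hσ.mul ((hθ.const_mul 2).const_sub 1))).neg.div_const
    4).add (((hasDerivAt_pow 3 u).mul (hσ.pow 2)).div_const 8)
  refine HasDerivAt.congr_deriv (f := fun v => remainderPoly v (v⁻¹ - n)) h ?_
  simp only [remainderDeriv, Pi.mul_apply, Pi.pow_apply]
  norm_num
  field_simp
  ring

theorem hasDerivAt_remainder {u : ℝ} (hu : Int.fract u⁻¹ ≠ 0) :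
    HasDerivAt remainder (remainderDeriv u (Int.fract u⁻¹)) u := by
  have hu0 : u ≠ 0 := by rintro rfl; simp at hu
  have hfloor : ∀ᶠ v in 𝓝 u, ⌊v⁻¹⌋ = ⌊u⁻¹⌋ := by
    have hlt : (⌊u⁻¹⌋ : ℝ) < u⁻¹ := lt_of_le_of_ne (Int.floor_le _)
      (fun h => hu (by rw [← Int.self_sub_floor]; linarith))
    filter_upwards [(continuousAt_inv₀ hu0).eventually
      (Ioo_mem_nhds hlt (Int.lt_floor_add_one u⁻¹))] with v hv
    exact Int.floor_eq_on_Ico _ _ ⟨hv.1.le, hv.2⟩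
  have heq : (fun v => remainderPoly v (v⁻¹ - ⌊u⁻¹⌋)) =ᶠ[𝓝 u] remainder := by
    filter_upwards [hfloor] with v hv
    rw [remainder, ← Int.self_sub_floor, hv]
  simpa only [Int.self_sub_floor] using
    (hasDerivAt_remainderPoly_inv_sub hu0 _).congr_of_eventuallyEq heq.symm

theorem abs_remainderDeriv_le {s θ : ℝ} (hs0 : 0 ≤ s) (hs1 : s ≤ 1) (hθ0 : 0 ≤ θ) (hθ1 : θ ≤ 1) :
    |remainderDeriv s θ| ≤ 1 / 4 := by
  have hσ0 : 0 ≤ θ * (1 - θ) := mul_nonneg hθ0 (by linarith)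
  have hσ : θ * (1 - θ) ≤ 1 / 4 := by nlinarith [sq_nonneg (1 - 2 * θ)]
  have hprod : -1 ≤ s * (1 - 2 * θ) := by nlinarith
  have hss : s ^ 2 * (θ * (1 - θ)) ≤ 1 / 4 := by nlinarith [sq_nonneg s, sq_nonneg (1 - 2 * θ)]
  have hfac : 0 ≤ 12 + 6 * s * (1 - 2 * θ) - 3 * s ^ 2 * (θ * (1 - θ)) := by linarith
  -- `8 · remainderDeriv s θ = 2 - σ (12 + 6 s (1 - 2θ) - 3 s² σ)` with `σ = θ (1 - θ)`, and the
  -- product subtracted from `2` lies in `[0, 4]`.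
  rw [remainderDeriv, abs_le]
  constructor
  · nlinarith [mul_nonneg (mul_nonneg hs0 hs0) (mul_nonneg hσ0 hσ0), mul_nonneg hs0 hσ0]
  · nlinarith [mul_nonneg hσ0 hfac]

theorem abs_remainder_sub_le {u v : ℝ} (hu : 0 < u) (huv : u ≤ v) (hv : v ≤ 1) :
    |remainder v - remainder u| ≤ (v - u) / 4 := by
  have hfract : ∀ x ∈ Set.Ioo u v \ Set.range (fun n : ℤ => (n : ℝ)⁻¹), Int.fract x⁻¹ ≠ 0 := by
    rintro x ⟨-, hx⟩ h
    obtain ⟨n, hn⟩ := Int.fract_eq_zero_iff.1 h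
    exact hx ⟨n, by simp only [hn, inv_inv]⟩
  have hpos : ∀ x ∈ Set.Ioo u v, 0 < x := fun x hx => hu.trans hx.1
  have h := norm_sub_le_of_hasDerivAt_off_countable (C := 1 / 4) huv (Set.countable_range _)
    (continuousOn_remainder.mono fun x hx => (hu.trans_le hx.1).ne')
    (fun x hx => hasDerivAt_remainder (hfract x hx))
    (fun x hx => abs_remainderDeriv_le (hpos x hx.1).le (hx.1.2.le.trans hv)
      (Int.fract_nonneg _) (Int.fract_lt_one _).le)
  rw [Real.norm_eq_abs] at h
  linarith

def weight (u : ℝ) : ℝ := 1 - 3 / 2 * u + 1 / 2 * u ^ 3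

theorem abs_weight_le_one {u : ℝ} (h0 : 0 ≤ u) (h1 : u ≤ 1) : |weight u| ≤ 1 := by
  rw [weight, abs_le]
  constructor <;> nlinarith [sq_nonneg u, sq_nonneg (1 - u), mul_nonneg h0 (sq_nonneg (1 - u))]

theorem sum_Icc_weight_div (F : ℕ) (Y : ℝ) :
    ∑ m ∈ Icc 1 F, weight (m / Y)
      = F - 3 * F * (F + 1) / (4 * Y) + (F * (F + 1)) ^ 2 / (8 * Y ^ 3) := by
  induction F with
  | zero => simp
  | succ F ih =>
    rw [sum_Icc_succ_top (by omega), ih, weight]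
    push_cast
    ring

theorem sum_weight_div {Y : ℝ} (hY : 0 < Y) :
    ∑ m ∈ Icc 1 ⌊Y⌋₊, weight (m / Y) = 3 / 8 * Y - 1 / 2 + 1 / (8 * Y) + remainder Y⁻¹ := by
  rw [sum_Icc_weight_div, remainder, remainderPoly, inv_inv, ← Int.self_sub_floor,
    ← natCast_floor_eq_intCast_floor hY.le]
  field_simp
  ring

theorem moebius_weight_identity {X : ℝ} (hX : 1 ≤ X) :
    3 / 8 * X * mf X - 1 / 2 * Mf X + (∑ n ∈ Icc 1 ⌊X⌋₊, (μ n : ℝ) * n) / (8 * X)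
      + ∑ n ∈ Icc 1 ⌊X⌋₊, (μ n : ℝ) * remainder (n / X) = weight X⁻¹ := by
  have hX0 : 0 < X := by linarith
  have hF : 1 ≤ ⌊X⌋₊ := Nat.le_floor (by exact_mod_cast hX)
  calc _ = ∑ n ∈ Icc 1 ⌊X⌋₊, (3 / 8 * X * ((μ n : ℝ) / n) - 1 / 2 * μ n
          + (μ n : ℝ) * n / (8 * X) + μ n * remainder (n / X)) := by
        simp only [mf, Mf, sum_add_distrib, sum_sub_distrib, mul_sum, sum_div]
    _ = ∑ n ∈ Icc 1 ⌊X⌋₊, (μ n : ℝ) * ∑ m ∈ Icc 1 (⌊X⌋₊ / n), weight ((n * m : ℕ) / X) := by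
        refine sum_congr rfl fun n hn => ?_
        have hn0 : (0 : ℝ) < n := by exact_mod_cast (mem_Icc.1 hn).1
        have hinner : ∀ m : ℕ, weight ((n * m : ℕ) / X) = weight (m / (X / n)) := fun m => by
          push_cast
          rw [div_div_eq_mul_div, mul_comm]
        simp only [hinner, ← Nat.floor_div_natCast, sum_weight_div (div_pos hX0 hn0), inv_div]
        field_simp
    _ = weight X⁻¹ := by
        simpa using sum_moebius_mul_sum_Icc_div (fun k => weight (k / X)) hF

theorem mul_mf_eq {X : ℝ} (hX : 1 ≤ X) :
    3 / 8 * X * mf X = weight X⁻¹ + 3 / 8 * Mf X + (∫ t in (1 : ℝ)..X, Mf t) / (8 * X)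
      - ∑ n ∈ Icc 1 ⌊X⌋₊, (μ n : ℝ) * remainder (n / X) := by
  have hidentity := moebius_weight_identity hX
  have hlinear : ∑ n ∈ Icc 1 ⌊X⌋₊, (μ n : ℝ) * n = X * Mf X - ∫ t in (1 : ℝ)..X, Mf t :=
    sum_mul_natCast_eq_sub_integral _ hX
  have hsplit : (X * Mf X - ∫ t in (1 : ℝ)..X, Mf t) / (8 * X)
      = Mf X / 8 - (∫ t in (1 : ℝ)..X, Mf t) / (8 * X) := by
    field_simp
  rw [hlinear, hsplit] at hidentity
  linarith

theorem abs_sum_moebius_mul_remainder_le {X : ℝ} (hX : 1 ≤ X) :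
    |∑ n ∈ Icc 1 ⌊X⌋₊, (μ n : ℝ) * remainder (n / X)|
      ≤ 1 / (4 * X) * ∫ t in (1 : ℝ)..X, |Mf t| := by
  have hX0 : 0 < X := by linarith
  have h := abs_sum_mul_sub_le_of_lipschitz (fun n => (μ n : ℝ)) (h := fun t => remainder (t / X))
    (L := 1 / (4 * X)) hX fun u v hu huv hv => by
      calc |remainder (v / X) - remainder (u / X)| ≤ (v / X - u / X) / 4 :=
            abs_remainder_sub_le (by positivity) (by gcongr) (by rwa [div_le_one hX0])
        _ = 1 / (4 * X) * (v - u) := by field_simp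
  rwa [div_self hX0.ne', remainder_one, mul_zero, sub_zero] at h

end Balazard

end

/-- Balazard's inequality. -/
theorem stmt3 (X : ℝ) (hX : 1 ≤ X) :
    |mf X| ≤ |Mf X| / X + (1 / X ^ 2) * (∫ t in (1:ℝ)..X, |Mf t|) + 8 / (3 * X) := by
  have hX0 : 0 < X := by linarith
  set IA := ∫ t in (1:ℝ)..X, |Mf t|
  have hweight := abs_le.1 <| Balazard.abs_weight_le_one (by positivity) (inv_le_one_of_one_le₀ hX)
  have hremainder := abs_le.1 <| Balazard.abs_sum_moebius_mul_remainder_le hX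
  have hintegral : |(∫ t in (1:ℝ)..X, Mf t) / (8 * X)| ≤ IA / (8 * X) := by
    rw [abs_div, abs_of_pos (by positivity : (0 : ℝ) < 8 * X)]
    gcongr
    exact abs_integral_le_integral_abs hX
  have hsplit : IA / (8 * X) + 1 / (4 * X) * IA = 3 / 8 * IA / X := by field_simp; ring
  have key : 3 / 8 * X * |mf X| ≤ 1 + 3 / 8 * |Mf X| + 3 / 8 * IA / X := by
    rw [← abs_of_pos (by positivity : 0 < 3 / 8 * X), ← abs_mul, Balazard.mul_mf_eq hX, abs_le]
    have := abs_le.1 hintegral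
    constructor <;> linarith [neg_abs_le (Mf X), le_abs_self (Mf X)]
  calc |mf X| = 8 / (3 * X) * (3 / 8 * X * |mf X|) := by field_simp
    _ ≤ 8 / (3 * X) * (1 + 3 / 8 * |Mf X| + 3 / 8 * IA / X) := by gcongr
    _ = |Mf X| / X + 1 / X ^ 2 * IA + 8 / (3 * X) := by field_simp; ring
end

section
/- Let X, K, K₀ be real numbers with 0 < K < K₀ ≤ X. Assume X/K₀ ≥ 5·10⁶, log(K₀/K) ≤ 19000, and that for all t ≥ 438653 one has |∑_{n ≤ t} μ²(n) − (6/π²)·t| ≤ 0.02767·√t. Then ∑_{X/K₀ < n ≤ X/K} μ²(n)/√n ≤ (12/π²)·√(X/K). -/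
/-!
With `a = X/K₀`, `b = X/K` and `S` the squarefree counting function, Abel summation with weight
`t ^ (-1/2)` writes the sum as `S(b)/√b - S(a)/√a + ½∫ₐᵇ S(t) t^(-3/2) dt`. Inserting
`S(t) ≤ (6/π²) t + E√t` into the boundary term at `b` and the integral, and
`S(a) ≥ (6/π²) a - E√a` at `a` (with `E = 0.02767`), the main terms telescope to
`(12/π²)(√b - √a)`; the error `2E + (E/2) log(b/a)` is then absorbed by `(12/π²)√a`, since
`a ≥ 5·10⁶` and `log(b/a) = log(K₀/K) ≤ 19000`.
-/

open Finset Real ArithmeticFunction MeasureTheory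
open scoped ArithmeticFunction.Moebius

theorem rpow_neg_half_eq_inv_sqrt {t : ℝ} (ht : 0 ≤ t) : t ^ (-(1 / 2) : ℝ) = (√t)⁻¹ := by
  rw [rpow_neg ht, sqrt_eq_rpow]

theorem rpow_neg_three_halves_eq_inv_mul_sqrt {t : ℝ} (ht : 0 ≤ t) :
    t ^ (-(3 / 2) : ℝ) = (t * √t)⁻¹ := by
  rw [show (3 / 2 : ℝ) = 1 + 1 / 2 by norm_num, rpow_neg ht, rpow_add' ht (by norm_num), rpow_one,
    sqrt_eq_rpow]

theorem hasDerivAt_rpow_neg_half {t : ℝ} (ht : 0 < t) :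
    HasDerivAt (fun x : ℝ => x ^ (-(1 / 2) : ℝ)) (-(t ^ (-(3 / 2) : ℝ) / 2)) t := by
  convert hasDerivAt_rpow_const (p := -(1 / 2)) (Or.inl ht.ne') using 1
  norm_num
  ring

section
variable (A E : ℝ) {a b : ℝ}

theorem continuousOn_rpow_neg_half_and_inv (ha : 0 < a) :
    ContinuousOn (fun t : ℝ => A * t ^ (-(1 / 2) : ℝ)) (Set.Icc a b) ∧
      ContinuousOn (fun t : ℝ => E * t⁻¹) (Set.Icc a b) :=
  ⟨continuousOn_const.mul (continuousOn_id.rpow_const fun _ ht => Or.inl (ha.trans_le ht.1).ne'),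
    continuousOn_const.mul (continuousOn_id.inv₀ fun _ ht => (ha.trans_le ht.1).ne')⟩

theorem integral_Ioc_rpow_neg_half_add_inv (ha : 0 < a) (hab : a ≤ b) :
    ∫ t in Set.Ioc a b, (A * t ^ (-(1 / 2) : ℝ) + E * t⁻¹) =
      2 * A * (√b - √a) + E * log (b / a) := by
  have hzero : (0 : ℝ) ∉ Set.uIcc a b := by
    rw [Set.uIcc_of_le hab]
    exact fun h => ha.not_ge h.1
  obtain ⟨hrpow, hinv⟩ := continuousOn_rpow_neg_half_and_inv A E (b := b) ha
  rw [← Set.uIcc_of_le hab] at hrpow hinv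
  rw [← intervalIntegral.integral_of_le hab,
    intervalIntegral.integral_add hrpow.intervalIntegrable hinv.intervalIntegrable,
    intervalIntegral.integral_const_mul, intervalIntegral.integral_const_mul, integral_inv hzero,
    integral_rpow (Or.inl (by norm_num)), sqrt_eq_rpow, sqrt_eq_rpow]
  norm_num
  ring

theorem integral_Ioc_rpow_neg_three_halves_mul_le {S : ℝ → ℝ} (ha : 0 < a) (hab : a ≤ b)
    (hS : ∀ t ∈ Set.Ioc a b, 0 ≤ S t ∧ S t ≤ A * t + E * √t) :
    ∫ t in Set.Ioc a b, t ^ (-(3 / 2) : ℝ) / 2 * S t ≤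
      A * (√b - √a) + E / 2 * log (b / a) := by
  have hbound : ∀ t ∈ Set.Ioc a b,
      ‖t ^ (-(3 / 2) : ℝ) / 2 * S t‖ ≤ A / 2 * t ^ (-(1 / 2) : ℝ) + E / 2 * t⁻¹ := by
    intro t ht
    have ht0 : 0 < t := ha.trans ht.1
    have hsqrt : 0 < √t := sqrt_pos.mpr ht0
    rw [rpow_neg_three_halves_eq_inv_mul_sqrt ht0.le, rpow_neg_half_eq_inv_sqrt ht0.le, norm_mul,
      norm_of_nonneg (hS t ht).1, norm_of_nonneg (by positivity)]
    calc (t * √t)⁻¹ / 2 * S t ≤ (t * √t)⁻¹ / 2 * (A * t + E * √t) := by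
          gcongr
          exact (hS t ht).2
      _ = A / 2 * (√t)⁻¹ + E / 2 * t⁻¹ := by field_simp
  obtain ⟨hrpow, hinv⟩ := continuousOn_rpow_neg_half_and_inv (A / 2) (E / 2) (b := b) ha
  calc ∫ t in Set.Ioc a b, t ^ (-(3 / 2) : ℝ) / 2 * S t
      ≤ ‖∫ t in Set.Ioc a b, t ^ (-(3 / 2) : ℝ) / 2 * S t‖ := le_norm_self _
    _ ≤ ∫ t in Set.Ioc a b, (A / 2 * t ^ (-(1 / 2) : ℝ) + E / 2 * t⁻¹) :=
          norm_integral_le_of_norm_le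
            ((hrpow.add hinv).integrableOn_Icc.mono_set Set.Ioc_subset_Icc_self)
            ((ae_restrict_iff' measurableSet_Ioc).mpr (Filter.Eventually.of_forall hbound))
    _ = A * (√b - √a) + E / 2 * log (b / a) := by
          rw [integral_Ioc_rpow_neg_half_add_inv _ _ ha hab]
          ring

end

theorem sum_Ioc_div_sqrt_eq (c : ℕ → ℝ) {a b : ℝ} (ha : 0 < a) (hab : a ≤ b) :
    ∑ n ∈ Ioc ⌊a⌋₊ ⌊b⌋₊, c n / √n =
      (∑ k ∈ Icc 0 ⌊b⌋₊, c k) / √b - (∑ k ∈ Icc 0 ⌊a⌋₊, c k) / √a +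
        ∫ t in Set.Ioc a b, t ^ (-(3 / 2) : ℝ) / 2 * ∑ k ∈ Icc 0 ⌊t⌋₊, c k := by
  have hpos : ∀ t ∈ Set.Icc a b, 0 < t := fun t ht => ha.trans_le ht.1
  have hderiv : ∀ t ∈ Set.Icc a b,
      deriv (fun x : ℝ => x ^ (-(1 / 2) : ℝ)) t = -(t ^ (-(3 / 2) : ℝ) / 2) :=
    fun t ht => (hasDerivAt_rpow_neg_half (hpos t ht)).deriv
  have hint : IntegrableOn (deriv fun x : ℝ => x ^ (-(1 / 2) : ℝ)) (Set.Icc a b) :=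
    (((continuousOn_id.rpow_const fun t ht => Or.inl (hpos t ht).ne').div_const 2).neg
      |>.integrableOn_Icc).congr_fun (fun t ht => (hderiv t ht).symm) measurableSet_Icc
  have habel := sum_mul_eq_sub_sub_integral_mul c ha.le hab
    (fun t ht => (hasDerivAt_rpow_neg_half (hpos t ht)).differentiableAt) hint
  rw [setIntegral_congr_fun measurableSet_Ioc
    (fun t ht => congrArg (· * _) (hderiv t (Set.Ioc_subset_Icc_self ht)))] at habel
  simp only [rpow_neg_half_eq_inv_sqrt (Nat.cast_nonneg _), rpow_neg_half_eq_inv_sqrt ha.le,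
    rpow_neg_half_eq_inv_sqrt (ha.le.trans hab), neg_mul, integral_neg] at habel
  simp only [div_eq_inv_mul, habel]
  ring

theorem sum_Ioc_div_sqrt_le {c : ℕ → ℝ} (hc : 0 ≤ c) {a b A E : ℝ} (ha : 0 < a) (hab : a ≤ b)
    (hupper : ∀ t ∈ Set.Icc a b, ∑ k ∈ Icc 0 ⌊t⌋₊, c k ≤ A * t + E * √t)
    (hlower : A * a - E * √a ≤ ∑ k ∈ Icc 0 ⌊a⌋₊, c k) :
    ∑ n ∈ Ioc ⌊a⌋₊ ⌊b⌋₊, c n / √n ≤ 2 * A * (√b - √a) + 2 * E + E / 2 * log (b / a) := by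
  have hsqrt_mul {t : ℝ} (ht : 0 ≤ t) : (A * √t + E) * √t = A * t + E * √t := by
    rw [add_mul, mul_assoc, mul_self_sqrt ht]
  have htop : (∑ k ∈ Icc 0 ⌊b⌋₊, c k) / √b ≤ A * √b + E := by
    rw [div_le_iff₀ (sqrt_pos.mpr (ha.trans_le hab)), hsqrt_mul (ha.le.trans hab)]
    exact hupper b ⟨hab, le_rfl⟩
  have hbot : A * √a - E ≤ (∑ k ∈ Icc 0 ⌊a⌋₊, c k) / √a := by
    rw [le_div_iff₀ (sqrt_pos.mpr ha), sub_mul, mul_assoc, mul_self_sqrt ha.le]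
    exact hlower
  have hintegral := integral_Ioc_rpow_neg_three_halves_mul_le A E ha hab fun t ht =>
    ⟨sum_nonneg fun k _ => hc k, hupper t (Set.Ioc_subset_Icc_self ht)⟩
  rw [sum_Ioc_div_sqrt_eq c ha hab]
  linarith

theorem sum_Icc_zero_moebius_sq (n : ℕ) :
    ∑ k ∈ Icc 0 n, ((μ k : ℝ)) ^ 2 = ∑ k ∈ Icc 1 n, ((μ k : ℝ)) ^ 2 := by
  rw [← insert_Icc_add_one_left_eq_Icc (Nat.zero_le n), sum_insert (by simp)]
  simp

theorem stmt8_general (X K K₀ : ℝ) (hK : 0 < K) (hKK₀ : K < K₀)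
    (h1 : 5 * 10 ^ 6 ≤ X / K₀) (h2 : Real.log (K₀ / K) ≤ 19000)
    (hsq : ∀ t : ℝ, 438653 ≤ t →
      |(∑ n ∈ Finset.Icc 1 ⌊t⌋₊, ((μ n : ℝ)) ^ 2) - (6 / π ^ 2) * t|
        ≤ 0.02767 * Real.sqrt t) :
    ∑ n ∈ Finset.Ioc ⌊X / K₀⌋₊ ⌊X / K⌋₊, ((μ n : ℝ)) ^ 2 / Real.sqrt n
      ≤ (12 / π ^ 2) * Real.sqrt (X / K) := by
  have hK₀ : 0 < K₀ := hK.trans hKK₀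
  have ha : 0 < X / K₀ := by linarith
  have hX : 0 < X := by simpa [div_pos_iff, hK₀, hK₀.not_gt] using ha
  have hab : X / K₀ ≤ X / K := div_le_div_of_nonneg_left hX.le hK hKK₀.le
  have hratio : X / K / (X / K₀) = K₀ / K := by field_simp
  have hbounds (t : ℝ) (ht : X / K₀ ≤ t) :=
    abs_le.mp (sum_Icc_zero_moebius_sq ⌊t⌋₊ ▸ hsq t (by linarith))
  have hmain := sum_Ioc_div_sqrt_le (c := fun n => ((μ n : ℝ)) ^ 2) (A := 6 / π ^ 2)
    (E := 0.02767) (fun n => sq_nonneg _) ha hab (fun t ht => by linarith [(hbounds t ht.1).2])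
    (by linarith [(hbounds _ le_rfl).1])
  have hsqrt_a : 2236 ≤ √(X / K₀) := le_sqrt_of_sq_le (by linarith)
  have hdensity : 0.6 < 6 / π ^ 2 := by
    rw [lt_div_iff₀ (by positivity)]
    nlinarith [pi_lt_d2, pi_pos]
  rw [hratio] at hmain
  have hgain := mul_le_mul hdensity.le hsqrt_a (by norm_num) (by positivity)
  rw [show (12 : ℝ) / π ^ 2 = 2 * (6 / π ^ 2) by ring]
  linarith

theorem stmt8 (X K K₀ : ℝ) (hK : 0 < K) (hKK₀ : K < K₀) (hK₀X : K₀ ≤ X)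
    (h1 : 5 * 10 ^ 6 ≤ X / K₀) (h2 : Real.log (K₀ / K) ≤ 19000)
    (hsq : ∀ t : ℝ, 438653 ≤ t →
      |(∑ n ∈ Finset.Icc 1 ⌊t⌋₊, ((μ n : ℝ)) ^ 2) - (6 / π ^ 2) * t|
        ≤ 0.02767 * Real.sqrt t) :
    ∑ n ∈ Finset.Ioc ⌊X / K₀⌋₊ ⌊X / K⌋₊, ((μ n : ℝ)) ^ 2 / Real.sqrt n
      ≤ (12 / π ^ 2) * Real.sqrt (X / K) :=
  stmt8_general X K K₀ hK hKK₀ h1 h2 hsq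
end

section
/- Suppose that |M(t)| ≤ √t for all 1 ≤ t ≤ 10¹⁶, where M(t) = ∑_{n ≤ t} μ(n). Then for every real X with 4·10⁷ ≤ X ≤ 10¹⁶, |∑_{n ≤ X} μ(n)·(log n)²| ≤ (log X + 4)·√X·log X. -/
/-!
Discrete Abel summation gives, with `N = ⌊X⌋`,
`∑_{n ≤ N} μ(n) log² n = M(N) log² N - ∑_{i < N} (log²(i+1) - log² i) M(i)`.
Since the logarithmic mean dominates the geometric mean,
`√i (log²(i+1) - log² i) ≤ 2 log(i+1) / √(i+1)`, so with `|M(i)| ≤ √i` the sum over `i`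
is at most `2 log N ∑_{k ≤ N} 1/√k ≤ 4 √N log N`, while the boundary term is at most `√N log² N`.
-/

open Finset Real ArithmeticFunction
open scoped ArithmeticFunction.Moebius

theorem Real.two_mul_log_le_sub_inv {y : ℝ} (hy : 1 ≤ y) : 2 * log y ≤ y - y⁻¹ := by
  have h := Real.self_le_sinh_iff.2 (Real.log_nonneg hy)
  rw [Real.sinh_log (by linarith)] at h
  linarith

theorem Real.log_sub_log_le_div_sqrt_mul {a b : ℝ} (ha : 0 < a) (hab : a ≤ b) :
    log b - log a ≤ (b - a) / √(a * b) := by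
  have hsa : 0 < √a := Real.sqrt_pos.2 ha
  have hsb : 0 < √b := Real.sqrt_pos.2 (ha.trans_le hab)
  have hy : 1 ≤ √b / √a := (one_le_div hsa).2 (Real.sqrt_le_sqrt hab)
  have hlog : log b - log a = 2 * log (√b / √a) := by
    rw [Real.log_div hsb.ne' hsa.ne', Real.log_sqrt ha.le, Real.log_sqrt (ha.trans_le hab).le]
    ring
  have hsub : √b / √a - (√b / √a)⁻¹ = (b - a) / √(a * b) := by
    rw [Real.sqrt_mul ha.le, inv_div]
    field_simp
    rw [Real.sq_sqrt ha.le, Real.sq_sqrt (ha.trans_le hab).le]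
  rw [hlog, ← hsub]
  exact Real.two_mul_log_le_sub_inv hy

theorem Real.sqrt_mul_sq_log_sub_sq_log_le {a b : ℝ} (ha : 0 < a) (hab : a ≤ b) (hb : 1 ≤ b) :
    √a * (log b ^ 2 - log a ^ 2) ≤ 2 * (b - a) * log b / √b := by
  have hsa : 0 < √a := Real.sqrt_pos.2 ha
  have hsb : 0 < √b := Real.sqrt_pos.2 (ha.trans_le hab)
  have hmono : log a ≤ log b := Real.log_le_log ha hab
  have hdiff := Real.log_sub_log_le_div_sqrt_mul ha hab
  rw [Real.sqrt_mul ha.le] at hdiff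
  calc √a * (log b ^ 2 - log a ^ 2) = √a * ((log b + log a) * (log b - log a)) := by ring
    _ ≤ √a * (2 * log b * ((b - a) / (√a * √b))) := by
      gcongr √a * ?_
      exact mul_le_mul (by linarith) hdiff (by linarith) (by linarith [Real.log_nonneg hb])
    _ = 2 * (b - a) * log b / √b := by field_simp

theorem Real.inv_sqrt_add_one_le_two_mul_sqrt_sub {x : ℝ} (hx : 0 ≤ x) :
    (√(x + 1))⁻¹ ≤ 2 * (√(x + 1) - √x) := by
  have hs : 0 < √(x + 1) := Real.sqrt_pos.2 (by linarith)
  rw [inv_le_iff_one_le_mul₀' hs]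
  nlinarith [Real.sq_sqrt hx, Real.sq_sqrt (by linarith : 0 ≤ x + 1), sq_nonneg (√(x + 1) - √x)]

theorem sum_range_inv_sqrt_succ_le (N : ℕ) : ∑ i ∈ range N, (√((i : ℝ) + 1))⁻¹ ≤ 2 * √N := by
  calc ∑ i ∈ range N, (√((i : ℝ) + 1))⁻¹
      ≤ ∑ i ∈ range N, 2 * (√(((i + 1 : ℕ) : ℝ)) - √(i : ℝ)) := by
        gcongr with i
        push_cast
        exact Real.inv_sqrt_add_one_le_two_mul_sqrt_sub i.cast_nonneg
    _ = 2 * √N := by rw [← mul_sum, sum_range_sub (fun i : ℕ => √(i : ℝ))]; simp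

theorem Finset.sum_Icc_mul_eq_sub_sum_range {R : Type*} [CommRing R] (a f : ℕ → R) (N : ℕ) :
    ∑ n ∈ Icc 1 N, a n * f n =
      f N * ∑ n ∈ Icc 1 N, a n - ∑ i ∈ range N, (f (i + 1) - f i) * ∑ n ∈ Icc 1 i, a n := by
  induction N with
  | zero => simp
  | succ N ih =>
    rw [sum_Icc_succ_top (by omega), sum_Icc_succ_top (by omega), sum_range_succ, ih]
    ring

theorem Mf_natCast (m : ℕ) : Mf m = ∑ n ∈ Icc 1 m, (μ n : ℝ) := by
  rw [Mf, Nat.floor_natCast]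

theorem abs_sq_log_succ_sub_mul_le {i N : ℕ} (hiN : i < N) {m : ℝ} (hm : |m| ≤ √i) :
    |(Real.log ((i + 1 : ℕ) : ℝ) ^ 2 - Real.log i ^ 2) * m|
      ≤ 2 * Real.log N * (√((i : ℝ) + 1))⁻¹ := by
  rcases i.eq_zero_or_pos with rfl | hi
  · simpa using mul_nonneg zero_le_two (Real.log_natCast_nonneg N)
  have hi₁ : (1 : ℝ) ≤ i := by exact_mod_cast hi
  have hlog : Real.log (i : ℝ) ≤ Real.log ((i : ℝ) + 1) :=
    Real.log_le_log (by linarith) (by linarith)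
  have hΔ : 0 ≤ Real.log ((i : ℝ) + 1) ^ 2 - Real.log i ^ 2 := by
    nlinarith [Real.log_nonneg hi₁]
  have hiN' : (i : ℝ) + 1 ≤ N := by exact_mod_cast hiN
  push_cast
  rw [abs_mul, abs_of_nonneg hΔ]
  calc (Real.log ((i : ℝ) + 1) ^ 2 - Real.log i ^ 2) * |m|
      ≤ √i * (Real.log ((i : ℝ) + 1) ^ 2 - Real.log i ^ 2) := by rw [mul_comm]; gcongr
    _ ≤ 2 * ((i + 1) - i) * Real.log ((i : ℝ) + 1) / √((i : ℝ) + 1) :=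
      Real.sqrt_mul_sq_log_sub_sq_log_le (by positivity) (by linarith) (by linarith)
    _ ≤ 2 * Real.log N * (√((i : ℝ) + 1))⁻¹ := by
      rw [add_sub_cancel_left, mul_one, div_eq_mul_inv]
      gcongr

theorem abs_sum_moebius_mul_sq_log_le {N : ℕ} (hM : ∀ m ≤ N, |Mf m| ≤ √m) :
    |∑ n ∈ Icc 1 N, (μ n : ℝ) * Real.log n ^ 2| ≤ (Real.log N + 4) * √N * Real.log N := by
  rw [sum_Icc_mul_eq_sub_sum_range]
  simp only [← Mf_natCast]
  have hboundary : |Real.log N ^ 2 * Mf N| ≤ Real.log N ^ 2 * √N := by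
    rw [abs_mul, abs_of_nonneg (sq_nonneg _)]
    gcongr
    exact hM N le_rfl
  have htail : |∑ i ∈ range N, (Real.log ((i + 1 : ℕ) : ℝ) ^ 2 - Real.log i ^ 2) * Mf i|
      ≤ 4 * √N * Real.log N :=
    calc _ ≤ ∑ i ∈ range N, |(Real.log ((i + 1 : ℕ) : ℝ) ^ 2 - Real.log i ^ 2) * Mf i| :=
          abs_sum_le_sum_abs _ _
      _ ≤ ∑ i ∈ range N, 2 * Real.log N * (√((i : ℝ) + 1))⁻¹ := by
          gcongr with i hi
          have hiN := mem_range.1 hi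
          exact abs_sq_log_succ_sub_mul_le hiN (hM i hiN.le)
      _ ≤ 2 * Real.log N * (2 * √N) := by
          rw [← mul_sum]
          gcongr
          exact sum_range_inv_sqrt_succ_le N
      _ = 4 * √N * Real.log N := by ring
  calc _ ≤ Real.log N ^ 2 * √N + 4 * √N * Real.log N :=
        (abs_sub _ _).trans (add_le_add hboundary htail)
    _ = (Real.log N + 4) * √N * Real.log N := by ring

theorem stmt10
    (hM : ∀ t : ℝ, 1 ≤ t → t ≤ 10 ^ 16 → |Mf t| ≤ Real.sqrt t) :
    ∀ X : ℝ, 4 * 10 ^ 7 ≤ X → X ≤ 10 ^ 16 →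
      |∑ n ∈ Finset.Icc 1 ⌊X⌋₊, (μ n : ℝ) * (Real.log n) ^ 2|
        ≤ (Real.log X + 4) * Real.sqrt X * Real.log X := by
  intro X hX₁ hX₂
  have hNX : (⌊X⌋₊ : ℝ) ≤ X := Nat.floor_le (by linarith)
  have hN : (1 : ℝ) ≤ ⌊X⌋₊ := by exact_mod_cast (Nat.one_le_floor_iff X).2 (by linarith)
  refine (abs_sum_moebius_mul_sq_log_le fun m hm => ?_).trans ?_
  · rcases m.eq_zero_or_pos with rfl | hm₀
    · simp [Mf]
    have hmN : (m : ℝ) ≤ ⌊X⌋₊ := by exact_mod_cast hm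
    exact hM m (by exact_mod_cast hm₀) (by linarith)
  · have hlog : Real.log ⌊X⌋₊ ≤ Real.log X := Real.log_le_log (by linarith) hNX
    have hlog₀ : 0 ≤ Real.log (⌊X⌋₊ : ℝ) := Real.log_nonneg hN
    have hlogX : 0 ≤ Real.log X := hlog₀.trans hlog
    gcongr
end

section
/- Assume |R(t)| ≤ 0.0065·t/log t for t ≥ 1514928, and that ∑_{n ≤ √X} Λ(n)/(n·log(X/n)) ≤ 1.04·log(log X/log √X) + 1.04/log X for X ≥ 1. Then for all X ≥ 2·10¹⁹, |R₄(X)| ≤ 0.0049·X, where R₄(X) = ∑_{n ≤ √X} Λ(n)·R(X/n). -/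
open Finset Real ArithmeticFunction

noncomputable def psi (X : ℝ) : ℝ := ∑ n ∈ Finset.Icc 1 ⌊X⌋₊, Λ n

noncomputable def Rf (X : ℝ) : ℝ := psi X - X

noncomputable def R4 (X : ℝ) : ℝ :=
  ∑ n ∈ Finset.Icc 1 ⌊Real.sqrt X⌋₊, Λ n * Rf (X / n)

/-!
Every term of `R4 X` has `X / n ≥ √X`, so the pointwise bound `|R(t)| ≤ c t / log t` applies to
each of them and `|R4 X| ≤ c X ∑_{n ≤ √X} Λ(n) / (n log (X / n))`. The assumed bound on this sum
is `1.04 log 2 + 1.04 / log X`, since `log X / log √X = 2`, and `log X ≥ 44` finishes the numerics.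
-/

lemma sqrt_le_div_of_le_sqrt {X n : ℝ} (hn : 0 < n) (h : n ≤ √X) : √X ≤ X / n := by
  have hX : 0 < √X := hn.trans_le h
  rw [le_div_iff₀ hn]
  calc √X * n ≤ √X * √X := by gcongr
    _ = X := mul_self_sqrt (sqrt_pos.mp hX).le

lemma abs_R4_le_mul_sum {c T X : ℝ} (hR : ∀ t : ℝ, T ≤ t → |Rf t| ≤ c * t / log t)
    (hT : T ≤ √X) :
    |R4 X| ≤ c * X * ∑ n ∈ Icc 1 ⌊√X⌋₊, Λ n / (n * log (X / n)) := by
  rw [R4, mul_sum]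
  refine (abs_sum_le_sum_abs _ _).trans (sum_le_sum fun n hn => ?_)
  obtain ⟨hn1, hn2⟩ := mem_Icc.mp hn
  have hn0 : (0 : ℝ) < n := by exact_mod_cast hn1
  have hn_le : (n : ℝ) ≤ √X := (Nat.cast_le.mpr hn2).trans (Nat.floor_le (sqrt_nonneg X))
  calc |Λ n * Rf (X / n)| = Λ n * |Rf (X / n)| := by
        rw [abs_mul, abs_of_nonneg vonMangoldt_nonneg]
    _ ≤ Λ n * (c * (X / n) / log (X / n)) :=
        mul_le_mul_of_nonneg_left
          (hR _ (hT.trans (sqrt_le_div_of_le_sqrt hn0 hn_le))) vonMangoldt_nonneg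
    _ = c * X * (Λ n / (n * log (X / n))) := by ring

lemma log_div_log_sqrt {X : ℝ} (hX : 1 < X) : log X / log √X = 2 := by
  have hlog : log X ≠ 0 := (log_pos hX).ne'
  rw [log_sqrt (by linarith)]
  field_simp

lemma le_log_of_two_pow_le {X : ℝ} {k : ℕ} (hX : 2 ^ k ≤ X) : k * 0.6931471803 ≤ log X := by
  have h := log_le_log (by positivity) hX
  rw [log_pow] at h
  nlinarith [log_two_gt_d9]

theorem stmt13
    (hR : ∀ t : ℝ, 1514928 ≤ t → |Rf t| ≤ 0.0065 * t / Real.log t)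
    (hsum : ∀ X : ℝ, 1 ≤ X →
      ∑ n ∈ Finset.Icc 1 ⌊Real.sqrt X⌋₊, Λ n / (n * Real.log (X / n))
        ≤ 1.04 * Real.log (Real.log X / Real.log (Real.sqrt X))
          + 1.04 / Real.log X) :
    ∀ X : ℝ, 2 * 10 ^ 19 ≤ X → |R4 X| ≤ 0.0049 * X := by
  intro X hX
  have hlogX : 44 ≤ log X := by
    have := le_log_of_two_pow_le (k := 64) (by norm_num; linarith)
    norm_num at this
    linarith
  have hsqrt : (1514928 : ℝ) ≤ √X := by
    rw [le_sqrt (by norm_num) (by linarith)]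
    linarith
  have hsum' := hsum X (by linarith)
  rw [log_div_log_sqrt (by linarith)] at hsum'
  have hinv : 1.04 / log X ≤ 1.04 / 44 := by gcongr
  calc |R4 X| ≤ 0.0065 * X * ∑ n ∈ Icc 1 ⌊√X⌋₊, Λ n / (n * log (X / n)) :=
        abs_R4_le_mul_sum hR hsqrt
    _ ≤ 0.0065 * X * (1.04 * Real.log 2 + 1.04 / log X) := by gcongr
    _ ≤ 0.0049 * X := by nlinarith [log_two_lt_d9]
end

section
/- Suppose |M(t)| ≤ (0.006688·log t − 0.039)·t/(log t)² for all t ≥ T with T = 1798118, that ∫₁^T |M(t)| dt ≤ 216378740, and that Balazard's inequality |m(X)| ≤ |M(X)|/X + (1/X²)∫₁^X |M(t)| dt + 8/(3X) holds. Then for all X ≥ 10¹⁴, |m(X)| ≤ (0.010032·log X − 0.0568)/(log X)². -/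
open Finset Real ArithmeticFunction
open scoped ArithmeticFunction.Moebius

/-!
On `[T, X]` the assumed bound for `|M(t)|` is dominated by the derivative of
`F(t) = 0.003344 t² / log t - 0.017828 t² / (log t)²`, and `F(T) ≥ 0`, so
`∫₁^X |M| ≤ 216378740 + F(X)`. Balazard's inequality then gives
`|m(X)| ≤ 0.010032 / log X - 0.056828 / (log X)² + 216378740 / X² + 8 / (3X)`, and the last two
terms are below `0.000028 / (log X)²` for `X ≥ 10¹⁴` because `(log X)² ≤ 16 √X`.
-/

lemma abs_Mf_le_floor (t : ℝ) : |Mf t| ≤ ⌊t⌋₊ := by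
  calc |Mf t| ≤ ∑ n ∈ Icc 1 ⌊t⌋₊, |(μ n : ℝ)| := abs_sum_le_sum_abs _ _
    _ ≤ ∑ _n ∈ Icc 1 ⌊t⌋₊, (1 : ℝ) := by
        gcongr with n
        rw [← Int.cast_abs, abs_moebius]
        split_ifs <;> norm_num
    _ = ⌊t⌋₊ := by simp

lemma measurable_Mf : Measurable Mf :=
  (measurable_from_nat (f := fun n : ℕ => ∑ k ∈ Icc 1 n, (μ k : ℝ))).comp Nat.measurable_floor

lemma intervalIntegrable_abs_Mf (a b : ℝ) :
    IntervalIntegrable (fun t => |Mf t|) MeasureTheory.volume a b := by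
  rw [intervalIntegrable_iff]
  refine MeasureTheory.Measure.integrableOn_of_bounded (M := ⌊max a b⌋₊) measure_Ioc_lt_top.ne
    measurable_Mf.abs.aestronglyMeasurable ?_
  refine MeasureTheory.ae_restrict_of_forall_mem measurableSet_uIoc fun t ht => ?_
  rw [Real.norm_eq_abs, abs_abs]
  exact (abs_Mf_le_floor t).trans (by exact_mod_cast Nat.floor_mono ht.2)

noncomputable def mertensPrimitive (a b t : ℝ) : ℝ :=
  a / 2 * t ^ 2 / log t - (b / 2 - a / 4) * t ^ 2 / log t ^ 2

lemma hasDerivAt_mertensPrimitive (a b : ℝ) {t : ℝ} (ht : t ≠ 0) (hlog : log t ≠ 0) :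
    HasDerivAt (mertensPrimitive a b)
      ((a * log t - b) * t / log t ^ 2 + (b - a / 2) * t / log t ^ 3) t := by
  have hsq : HasDerivAt (fun t : ℝ => t ^ 2) (2 * t) t := by simpa using hasDerivAt_pow 2 t
  have hl := hasDerivAt_log ht
  refine (((hsq.const_mul (a / 2)).div hl hlog).sub
    ((hsq.const_mul (b / 2 - a / 4)).div (hl.pow 2) (pow_ne_zero 2 hlog))).congr_deriv ?_
  simp only [Pi.pow_apply]
  field_simp
  ring

lemma mertensPrimitive_nonneg {a b t : ℝ} (ht : 1 < t) (h : b / 2 - a / 4 ≤ a / 2 * log t) :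
    0 ≤ mertensPrimitive a b t := by
  have hlog : 0 < log t := log_pos ht
  rw [mertensPrimitive, sub_nonneg, div_le_div_iff₀ (by positivity) (by positivity)]
  have := mul_le_mul_of_nonneg_right h (by positivity : 0 ≤ t ^ 2 * log t)
  nlinarith

lemma integral_le_mertensPrimitive_sub {f : ℝ → ℝ} {a b T X : ℝ} (hT : 1 < T) (hTX : T ≤ X)
    (hab : a / 2 ≤ b) (hf : IntervalIntegrable f MeasureTheory.volume T X)
    (hle : ∀ t ∈ Set.Ioo T X, f t ≤ (a * log t - b) * t / log t ^ 2) :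
    ∫ t in T..X, f t ≤ mertensPrimitive a b X - mertensPrimitive a b T := by
  have hderiv : ∀ t ∈ Set.Icc T X, HasDerivAt (mertensPrimitive a b)
      ((a * log t - b) * t / log t ^ 2 + (b - a / 2) * t / log t ^ 3) t := fun t ht =>
    hasDerivAt_mertensPrimitive a b (by linarith [ht.1]) (log_pos (by linarith [ht.1])).ne'
  refine intervalIntegral.integral_le_sub_of_hasDeriv_right_of_le hTX
    (fun t ht => (hderiv t ht).continuousAt.continuousWithinAt)
    (fun t ht => (hderiv t (Set.Ioo_subset_Icc_self ht)).hasDerivWithinAt)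
    ((intervalIntegrable_iff_integrableOn_Icc_of_le hTX).1 hf) fun t ht => ?_
  have : 0 ≤ (b - a / 2) * t / log t ^ 3 := by
    have := log_pos (hT.trans ht.1)
    have := sub_nonneg.2 hab
    have : 0 < t := by linarith [ht.1]
    positivity
  linarith [hle t ht]

lemma integral_abs_Mf_le {T I X : ℝ} (hT : 729 ≤ T)
    (hM : ∀ t : ℝ, T ≤ t → |Mf t| ≤ (0.006688 * log t - 0.039) * t / log t ^ 2)
    (hI : ∫ t in (1 : ℝ)..T, |Mf t| ≤ I) (hTX : T ≤ X) :
    ∫ t in (1 : ℝ)..X, |Mf t| ≤ I + mertensPrimitive 0.006688 0.039 X := by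
  have hlogT : 6 ≤ log T := by
    rw [le_log_iff_exp_le (by linarith), show (6 : ℝ) = (6 : ℕ) * 1 by norm_num, exp_nat_mul]
    nlinarith [pow_le_pow_left₀ (exp_pos 1).le exp_one_lt_three.le 6]
  rw [← intervalIntegral.integral_add_adjacent_intervals (intervalIntegrable_abs_Mf 1 T)
    (intervalIntegrable_abs_Mf T X)]
  have := integral_le_mertensPrimitive_sub (by linarith) hTX (by norm_num)
    (intervalIntegrable_abs_Mf T X) fun t ht => hM t ht.1.le
  have := mertensPrimitive_nonneg (a := 0.006688) (b := 0.039) (by linarith : 1 < T)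
    (by linarith)
  linarith

lemma log_sq_le_sqrt {x : ℝ} (hx : 1 ≤ x) : log x ^ 2 ≤ 16 * √x := by
  have hle := log_le_rpow_div (by linarith) (by norm_num : (0 : ℝ) < 1 / 4) (x := x)
  have hsq : (x ^ (1 / 4 : ℝ)) ^ 2 = √x := by
    rw [sqrt_eq_rpow, ← rpow_natCast, ← rpow_mul (by linarith)]
    norm_num
  nlinarith [log_nonneg hx]

lemma tail_mul_log_sq_le {X : ℝ} (hX : 10 ^ 14 ≤ X) :
    (216378740 / X ^ 2 + 8 / (3 * X)) * log X ^ 2 ≤ 0.000028 := by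
  set q := √X
  have hq : 10 ^ 7 ≤ q := le_sqrt_of_sq_le (by linarith)
  have hXq : X = q ^ 2 := (sq_sqrt (by linarith)).symm
  have hlog := log_sq_le_sqrt (by linarith : 1 ≤ X)
  calc (216378740 / X ^ 2 + 8 / (3 * X)) * log X ^ 2
      ≤ (216378740 / X ^ 2 + 8 / (3 * X)) * (16 * q) := by gcongr
    _ = 16 * 216378740 / q ^ 3 + 128 / 3 / q := by rw [hXq]; field_simp; ring
    _ ≤ 16 * 216378740 / (10 ^ 7) ^ 3 + 128 / 3 / 10 ^ 7 := by gcongr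
    _ ≤ 0.000028 := by norm_num

theorem stmt18
    (h1 : ∀ t : ℝ, (1798118 : ℝ) ≤ t →
      |Mf t| ≤ (0.006688 * Real.log t - 0.039) * t / (Real.log t) ^ 2)
    (h2 : (∫ t in (1:ℝ)..(1798118 : ℝ), |Mf t|) ≤ 216378740)
    (hBalazard : ∀ X : ℝ, 1 ≤ X →
      |mf X| ≤ |Mf X| / X + (1 / X ^ 2) * (∫ t in (1:ℝ)..X, |Mf t|) + 8 / (3 * X)) :
    ∀ X : ℝ, 10 ^ 14 ≤ X →
      |mf X| ≤ (0.010032 * Real.log X - 0.0568) / (Real.log X) ^ 2 := by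
  intro X hX
  set T : ℝ := 1798118
  have hTX : T ≤ X := by linarith
  have hX0 : 0 < X := by linarith
  have hL : 0 < log X := log_pos (by linarith)
  have hInt := integral_abs_Mf_le (by norm_num) h1 h2 hTX
  have hM : |Mf X| / X ≤ (0.006688 * log X - 0.039) / log X ^ 2 := by
    rw [div_le_iff₀ hX0, div_mul_eq_mul_div]
    exact h1 X hTX
  have hI : 1 / X ^ 2 * ∫ t in (1 : ℝ)..X, |Mf t|
      ≤ 216378740 / X ^ 2 + (0.003344 / log X - 0.017828 / log X ^ 2) := by
    calc 1 / X ^ 2 * ∫ t in (1 : ℝ)..X, |Mf t|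
        ≤ 1 / X ^ 2 * (216378740 + mertensPrimitive 0.006688 0.039 X) := by gcongr
      _ = _ := by rw [mertensPrimitive]; field_simp; ring
  have htail := tail_mul_log_sq_le hX
  rw [← le_div_iff₀ (by positivity)] at htail
  calc |mf X| ≤ |Mf X| / X + 1 / X ^ 2 * (∫ t in (1 : ℝ)..X, |Mf t|) + 8 / (3 * X) :=
        hBalazard X (by linarith)
    _ ≤ (0.006688 * log X - 0.039) / log X ^ 2 + (0.003344 / log X - 0.017828 / log X ^ 2)
        + (216378740 / X ^ 2 + 8 / (3 * X)) := by linarith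
    _ ≤ (0.006688 * log X - 0.039) / log X ^ 2 + (0.003344 / log X - 0.017828 / log X ^ 2)
        + 0.000028 / log X ^ 2 := by gcongr
    _ = (0.010032 * log X - 0.0568) / log X ^ 2 := by field_simp; ring
end
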